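/- Let N ≥ 1 and q > 0. There exists a constant c > 0 depending only on q such that for all u, v ∈ ℝ^N one has |u^{⟨(q+1)/2⟩} − v^{⟨(q+1)/2⟩}|² ≤ c·𝔟[u,v] ≤ c·(v^{⟨q⟩} − u^{⟨q⟩})·(v − u), where · denotes the Euclidean inner product. In particular 𝔟[u,v] ≥ 0. -/

import Mathlib

/-!
Write `a = ‖u‖`, `b = ‖v‖`, `p = ⟪u, v⟫` and `m = (q + 1) / 2`. Both
`‖u^⟨m⟩ - v^⟨m⟩‖² = a^{2m} + b^{2m} - 2 a^{m-1} b^{m-1} p` and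
`(q + 1) 𝔟[u,v] = b^{q+1} + q a^{q+1} - (q + 1) a^{q-1} p` are affine in `p ∈ [-ab, ab]`, so it
suffices to compare them at `p = ± ab`. At `p = ab` this is the scalar inequality
`s (a^m - b^m)² ≤ b^{q+1} + q a^{q+1} - (q + 1) a^q b` for `0 ≤ s ≤ min q 1`, which is the
three-term weighted AM–GM inequality for `a^{q+1}`, `a^m b^m`, `b^{q+1}` with weights
`(q - s, 2s, 1 - s) / (q + 1)`; at `p = -ab` it is `(a^m + b^m)² ≤ 2 (a^{2m} + b^{2m})`.
Nonnegativity of `𝔟` is Cauchy–Schwarz plus Young, and `𝔟[u,v] + 𝔟[v,u]` is exactly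
`(v^⟨q⟩ - u^⟨q⟩)·(v - u)`, which gives the middle inequality.
-/

/-- For `α > 0` and a vector `u`, the power `u^{⟨α⟩} := ‖u‖^(α-1) • u` (with `0^{⟨α⟩} = 0`). -/
noncomputable def vpow {E : Type*} [NormedAddCommGroup E] [NormedSpace ℝ E] (α : ℝ) (u : E) : E :=
  (‖u‖ ^ (α - 1)) • u

/-- The boundary term `𝔟[u,v] := (1/(q+1))|v|^{q+1} + (q/(q+1))|u|^{q+1} − u^{⟨q⟩}·v`. -/
noncomputable def bterm {E : Type*} [NormedAddCommGroup E] [InnerProductSpace ℝ E]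
    (q : ℝ) (u v : E) : ℝ :=
  (1 / (q + 1)) * ‖v‖ ^ (q + 1) + (q / (q + 1)) * ‖u‖ ^ (q + 1) - (inner ℝ (vpow q u) v : ℝ)

open Real

lemma Real.rpow_sub_one_mul_self {x y : ℝ} (hx : 0 ≤ x) (hy : y ≠ 0) :
    x ^ (y - 1) * x = x ^ y := by
  rw [← rpow_add_one' hx (by simpa using hy), sub_add_cancel]

lemma Real.rpow_half_sq {x : ℝ} (hx : 0 ≤ x) (y : ℝ) : (x ^ (y / 2)) ^ 2 = x ^ y := by
  rw [← rpow_mul_natCast hx]; norm_num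

section Scalar

variable {q s a b : ℝ}

lemma rpow_mul_le_weighted (hs0 : 0 ≤ s) (hsq : s ≤ q) (hs1 : s ≤ 1) (ha : 0 ≤ a)
    (hb : 0 ≤ b) :
    (q + 1) * (a ^ q * b) ≤
      (q - s) * a ^ (q + 1) + 2 * s * (a ^ ((q + 1) / 2) * b ^ ((q + 1) / 2)) +
        (1 - s) * b ^ (q + 1) := by
  have hq1 : 0 < q + 1 := by linarith
  have amgm := geom_mean_le_arith_mean3_weighted (w₁ := (q - s) / (q + 1))
    (w₂ := 2 * s / (q + 1)) (w₃ := (1 - s) / (q + 1)) (p₁ := a ^ (q + 1))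
    (p₂ := a ^ ((q + 1) / 2) * b ^ ((q + 1) / 2)) (p₃ := b ^ (q + 1))
    (div_nonneg (by linarith) hq1.le) (by positivity) (div_nonneg (by linarith) hq1.le)
    (by positivity) (by positivity) (by positivity) (by field_simp; ring)
  have geom : (a ^ (q + 1)) ^ ((q - s) / (q + 1)) *
      (a ^ ((q + 1) / 2) * b ^ ((q + 1) / 2)) ^ (2 * s / (q + 1)) *
      (b ^ (q + 1)) ^ ((1 - s) / (q + 1)) = a ^ q * b := by
    have e₁ : (q + 1) * ((q - s) / (q + 1)) = q - s := by field_simp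
    have e₂ : (q + 1) / 2 * (2 * s / (q + 1)) = s := by field_simp
    have e₃ : (q + 1) * ((1 - s) / (q + 1)) = 1 - s := by field_simp
    rw [mul_rpow (by positivity) (by positivity), ← rpow_mul ha, ← rpow_mul ha, ← rpow_mul hb,
      ← rpow_mul hb, e₁, e₂, e₃]
    calc a ^ (q - s) * (a ^ s * b ^ s) * b ^ (1 - s)
        = a ^ (q - s + s) * b ^ (s + (1 - s)) := by
          rw [rpow_add_of_nonneg ha (by linarith) hs0, rpow_add_of_nonneg hb hs0 (by linarith)]
          ring
      _ = a ^ q * b := by simp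
  rw [geom] at amgm
  calc (q + 1) * (a ^ q * b)
      ≤ (q + 1) * ((q - s) / (q + 1) * a ^ (q + 1) +
          2 * s / (q + 1) * (a ^ ((q + 1) / 2) * b ^ ((q + 1) / 2)) +
          (1 - s) / (q + 1) * b ^ (q + 1)) := by gcongr
    _ = _ := by field_simp

lemma rpow_mul_le_young (hq : 0 ≤ q) (ha : 0 ≤ a) (hb : 0 ≤ b) :
    (q + 1) * (a ^ q * b) ≤ q * a ^ (q + 1) + b ^ (q + 1) := by
  simpa using rpow_mul_le_weighted le_rfl hq zero_le_one ha hb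

lemma mul_sq_rpow_sub_rpow_le (hs0 : 0 ≤ s) (hsq : s ≤ q) (hs1 : s ≤ 1) (ha : 0 ≤ a)
    (hb : 0 ≤ b) :
    s * (a ^ ((q + 1) / 2) - b ^ ((q + 1) / 2)) ^ 2 ≤
      b ^ (q + 1) + q * a ^ (q + 1) - (q + 1) * (a ^ q * b) := by
  have amgm := rpow_mul_le_weighted hs0 hsq hs1 ha hb
  have hA := rpow_half_sq ha (q + 1)
  have hB := rpow_half_sq hb (q + 1)
  linear_combination amgm + s * hA + s * hB

lemma affine_nonneg_of_abs_le {α β p M : ℝ} (hp : |p| ≤ M) (hM : 0 ≤ α + β * M)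
    (hnegM : 0 ≤ α - β * M) : 0 ≤ α + β * p := by
  have hβM : |β| * M ≤ α := by
    rcases abs_cases β with ⟨h, _⟩ | ⟨h, _⟩ <;> rw [h] <;> linarith
  have hβp : |β * p| ≤ |β| * M := abs_mul β p ▸ mul_le_mul_of_nonneg_left hp (abs_nonneg β)
  linarith [neg_abs_le (β * p)]

lemma mul_sq_sub_le_of_abs_le {p : ℝ} (hq : 0 < q) (hs0 : 0 ≤ s) (hsq : s ≤ q) (hs1 : s ≤ 1)
    (ha : 0 ≤ a) (hb : 0 ≤ b) (hp : |p| ≤ a * b) :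
    s * ((a ^ ((q + 1) / 2)) ^ 2 + (b ^ ((q + 1) / 2)) ^ 2 -
        2 * (a ^ ((q + 1) / 2 - 1) * b ^ ((q + 1) / 2 - 1) * p)) ≤
      2 * (b ^ (q + 1) + q * a ^ (q + 1) - (q + 1) * (a ^ (q - 1) * p)) := by
  set m := (q + 1) / 2
  have hm : m ≠ 0 := by positivity
  have hA : (a ^ m) ^ 2 = a ^ (q + 1) := rpow_half_sq ha _
  have hB : (b ^ m) ^ 2 = b ^ (q + 1) := rpow_half_sq hb _
  have hAm := rpow_sub_one_mul_self ha hm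
  have hBm := rpow_sub_one_mul_self hb hm
  have hAq := rpow_sub_one_mul_self ha hq.ne'
  have amgm := mul_sq_rpow_sub_rpow_le hs0 hsq hs1 ha hb
  have young := rpow_mul_le_young hq.le ha hb
  have affine := affine_nonneg_of_abs_le hp
    (α := 2 * (b ^ (q + 1) + q * a ^ (q + 1)) - s * ((a ^ m) ^ 2 + (b ^ m) ^ 2))
    (β := 2 * s * (a ^ (m - 1) * b ^ (m - 1)) - 2 * (q + 1) * a ^ (q - 1)) ?_ ?_
  · linear_combination affine
  · linear_combination amgm + young + 2 * (q + 1) * b * hAq - 2 * s * b ^ (m - 1) * b * hAm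
      - 2 * s * a ^ m * hBm
  · have hX : 0 ≤ s * (a ^ m - b ^ m) ^ 2 := by positivity
    have hA' : 0 ≤ (q - s) * a ^ (q + 1) := mul_nonneg (by linarith) (by positivity)
    have hB' : 0 ≤ (1 - s) * b ^ (q + 1) := mul_nonneg (by linarith) (by positivity)
    have hAB : 0 ≤ (q + 1) * (a ^ q * b) := by positivity
    linear_combination hX + 2 * hA' + 2 * hB' + 2 * hAB + 2 * s * hA + 2 * s * hB
      - 2 * (q + 1) * b * hAq + 2 * s * b ^ (m - 1) * b * hAm + 2 * s * a ^ m * hBm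

end Scalar

section NormedSpace

variable {E : Type*} [NormedAddCommGroup E] [NormedSpace ℝ E]

lemma norm_vpow {α : ℝ} (hα : α ≠ 0) (u : E) : ‖vpow α u‖ = ‖u‖ ^ α := by
  rw [vpow, norm_smul, norm_of_nonneg (by positivity),
    rpow_sub_one_mul_self (norm_nonneg u) hα]

end NormedSpace

section InnerProductSpace

variable {E : Type*} [NormedAddCommGroup E] [InnerProductSpace ℝ E] {q : ℝ}

lemma real_inner_vpow_self (hq : q + 1 ≠ 0) (u : E) :
    inner ℝ (vpow q u) u = ‖u‖ ^ (q + 1) := by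
  rw [vpow, real_inner_smul_left, real_inner_self_eq_norm_sq, ← rpow_natCast,
    ← rpow_add' (norm_nonneg u) (by convert hq using 1; push_cast; ring)]
  push_cast; ring_nf

lemma norm_vpow_sub_vpow_sq {α : ℝ} (hα : α ≠ 0) (u v : E) :
    ‖vpow α u - vpow α v‖ ^ 2 =
      (‖u‖ ^ α) ^ 2 + (‖v‖ ^ α) ^ 2 - 2 * (‖u‖ ^ (α - 1) * ‖v‖ ^ (α - 1) * inner ℝ u v) := by
  rw [norm_sub_sq_real, norm_vpow hα, norm_vpow hα, vpow, vpow, real_inner_smul_left,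
    real_inner_smul_right]
  ring

lemma add_one_mul_bterm (hq : q + 1 ≠ 0) (u v : E) :
    (q + 1) * bterm q u v =
      ‖v‖ ^ (q + 1) + q * ‖u‖ ^ (q + 1) - (q + 1) * (‖u‖ ^ (q - 1) * inner ℝ u v) := by
  rw [bterm, vpow, real_inner_smul_left]
  field_simp

lemma bterm_nonneg (hq : 0 < q) (u v : E) : 0 ≤ bterm q u v := by
  have hq1 : 0 < q + 1 := by linarith
  have young := rpow_mul_le_young hq.le (norm_nonneg u) (norm_nonneg v)
  have cauchySchwarz : inner ℝ (vpow q u) v ≤ ‖u‖ ^ q * ‖v‖ :=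
    (real_inner_le_norm _ _).trans_eq (by rw [norm_vpow hq.ne'])
  have hbound :
      ‖u‖ ^ q * ‖v‖ ≤ 1 / (q + 1) * ‖v‖ ^ (q + 1) + q / (q + 1) * ‖u‖ ^ (q + 1) := by
    rw [div_mul_eq_mul_div, div_mul_eq_mul_div, ← add_div, le_div_iff₀ hq1]
    linarith
  rw [bterm]
  linarith

lemma bterm_add_bterm_swap (hq : q + 1 ≠ 0) (u v : E) :
    bterm q u v + bterm q v u = inner ℝ (vpow q v - vpow q u) (v - u) := by
  rw [bterm, bterm, inner_sub_left, inner_sub_right, inner_sub_right, real_inner_vpow_self hq,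
    real_inner_vpow_self hq]
  field_simp
  ring

lemma mul_norm_vpow_sub_vpow_sq_le {s : ℝ} (hq : 0 < q) (hs0 : 0 ≤ s) (hsq : s ≤ q)
    (hs1 : s ≤ 1) (u v : E) :
    s * ‖vpow ((q + 1) / 2) u - vpow ((q + 1) / 2) v‖ ^ 2 ≤ 2 * ((q + 1) * bterm q u v) := by
  rw [norm_vpow_sub_vpow_sq (by positivity), add_one_mul_bterm (by positivity)]
  exact mul_sq_sub_le_of_abs_le hq hs0 hsq hs1 (norm_nonneg u) (norm_nonneg v)
    (abs_real_inner_le_norm u v)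

end InnerProductSpace

/-- There exists a constant `c > 0`, depending only on `q > 0`, such that for all `N ≥ 1` and
all `u, v ∈ ℝ^N`:
`|u^{⟨(q+1)/2⟩} − v^{⟨(q+1)/2⟩}|² ≤ c·𝔟[u,v] ≤ c·(v^{⟨q⟩} − u^{⟨q⟩})·(v − u)`,
and in particular `𝔟[u,v] ≥ 0`. -/
theorem stmt3 (q : ℝ) (hq : 0 < q) :
    ∃ c : ℝ, 0 < c ∧ ∀ (N : ℕ), 1 ≤ N → ∀ u v : EuclideanSpace ℝ (Fin N),
      ‖vpow ((q + 1) / 2) u - vpow ((q + 1) / 2) v‖ ^ 2 ≤ c * bterm q u v ∧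
      c * bterm q u v ≤ c * (inner ℝ (vpow q v - vpow q u) (v - u) : ℝ) ∧
      0 ≤ bterm q u v := by
  have hs : 0 < min q 1 := lt_min hq one_pos
  refine ⟨2 * (q + 1) / min q 1, by positivity, fun N _ u v => ⟨?_, ?_, bterm_nonneg hq u v⟩⟩
  · rw [div_mul_eq_mul_div, le_div_iff₀ hs, mul_comm, mul_assoc]
    exact mul_norm_vpow_sub_vpow_sq_le hq hs.le (min_le_left _ _) (min_le_right _ _) u v
  · rw [← bterm_add_bterm_swap (by positivity) u v]
    exact mul_le_mul_of_nonneg_left (le_add_of_nonneg_right (bterm_nonneg hq v u))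
      (by positivity)
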